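/- arXiv:1912.00452 — 6 statements merged into one kernel-verified Lean document; each statement's English description precedes it below -/
import Mathlib

section
/- Let n be a power of 2 and let k be a natural number with k < n. Then S_k · S_{n−1−k} = S_{n−1} in R[x]. -/
/-- The Sierpiński polynomial `S m = ∏_{j≥0} (1 + X^(2^j))^(d_j m)` where `d_j m` is the
`j`-th binary digit of `m`. -/
noncomputable def Sier (R : Type*) [CommRing R] (m : ℕ) : Polynomial R :=
  ∏ j ∈ Finset.range (m + 1), if m.testBit j then 1 + Polynomial.X ^ (2 ^ j) else 1

/-! Subtracting `k < 2 ^ t` from `2 ^ t - 1` flips the `t` low binary digits of `k`, so each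
factor `1 + X ^ (2 ^ j)` with `j < t` occurs in exactly one of `S k` and `S (2 ^ t - 1 - k)`. -/

open Finset Polynomial

lemma Sier_eq_prod_range {R : Type*} [CommRing R] {m N : ℕ} (hm : m < 2 ^ N) :
    Sier R m = ∏ j ∈ range N, if m.testBit j then 1 + X ^ (2 ^ j) else 1 := by
  have factor_eq_one {L : ℕ} (hL : m < 2 ^ L) (j : ℕ) (hj : j ≥ L) :
      (if m.testBit j then 1 + X ^ (2 ^ j) else 1 : R[X]) = 1 := by
    rw [Nat.testBit_lt_two_pow (hL.trans_le (Nat.pow_le_pow_right two_pos hj)),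
      if_neg Bool.false_ne_true]
  have hm' : m < 2 ^ (m + 1) := Nat.lt_two_pow_self.trans (Nat.pow_lt_pow_succ one_lt_two)
  exact (eventually_constant_prod (factor_eq_one hm') (le_max_right N (m + 1))).symm.trans
    (eventually_constant_prod (factor_eq_one hm) (le_max_left N (m + 1)))

/-- If n is a power of 2 and k < n, then S k * S (n-1-k) = S (n-1). -/
theorem sierpinski_complement (R : Type*) [CommRing R] (n k : ℕ)
    (hn : ∃ t : ℕ, n = 2 ^ t) (hk : k < n) :
    Sier R k * Sier R (n - 1 - k) = Sier R (n - 1) := by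
  obtain ⟨t, rfl⟩ := hn
  rw [Sier_eq_prod_range hk, Sier_eq_prod_range (N := t) (by omega),
    Sier_eq_prod_range (N := t) (by omega), ← prod_mul_distrib]
  refine prod_congr rfl fun j hj => ?_
  rw [show 2 ^ t - 1 - k = 2 ^ t - (k + 1) by omega, Nat.testBit_two_pow_sub_succ hk,
    Nat.testBit_two_pow_sub_one, decide_eq_true (mem_range.1 hj)]
  cases k.testBit j <;> simp
end

section
/- For every m ∈ ℕ, the polynomial S̄_m = ∏_{j≥0} (1 − x^{2^j})^{d_j(m)} equals the termwise product σ ⊙ S_m; that is, for every i ∈ ℕ, the coefficient of x^i in S̄_m equals σ_i times the coefficient of x^i in S_m, where σ_i = (−1)^{H(i)} and H(i) is the number of 1s in the binary expansion of i. -/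
/-!
Expanding `∏_{j ∈ s} (1 + c_j X^{2^j})` gives `∑_{t ⊆ s} (∏_{j ∈ t} c_j) X^{∑_{j ∈ t} 2^j}`, and by
uniqueness of binary expansions the monomial `X^n` comes from exactly one `t`, the set `bits n` of
positions of the 1s in the binary expansion of `n`. Hence the coefficient of `X^n` is
`∏_{j ∈ bits n} c_j` when `bits n ⊆ s` and `0` otherwise; for `c = 1` this is `1` and for
`c = -1` it is `(-1)^{H(n)} = σ_n`.
-/

/-- The signed Thue–Morse sequence: `σ n = (-1)^(Hamming weight of n)`. -/
noncomputable def sgn (R : Type*) [CommRing R] (n : ℕ) : R := (-1) ^ (Nat.digits 2 n).sum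

/-- The signed Sierpiński polynomial `S̄ m = ∏_{j≥0} (1 - X^(2^j))^(d_j m)`. -/
noncomputable def SierBar (R : Type*) [CommRing R] (m : ℕ) : Polynomial R :=
  ∏ j ∈ Finset.range (m + 1), if m.testBit j then 1 - Polynomial.X ^ (2 ^ j) else 1

open Polynomial

theorem Nat.sum_digits_two_eq_length_bitIndices (n : ℕ) :
    (Nat.digits 2 n).sum = n.bitIndices.length := by
  induction n using Nat.binaryRec' with
  | zero => simp
  | bit b n h ih =>
    have hpos : 0 < 2 * n + b.toNat := by cases b <;> grind
    rw [Nat.bit_val, Nat.digits_def' (by norm_num) hpos]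
    cases b <;> simp [Nat.mul_add_div, ih, Nat.add_comm 1]

theorem Finset.prod_range_ite_testBit {M : Type*} [CommMonoid M] (m : ℕ) (f : ℕ → M) :
    ∏ j ∈ range (m + 1), (if m.testBit j then f j else 1) = ∏ j ∈ m.bitIndices.toFinset, f j := by
  rw [← prod_filter]
  congr 1
  ext j
  simp only [mem_filter, mem_range, List.mem_toFinset, Nat.mem_bitIndices, and_iff_right_iff_imp]
  exact fun h ↦ Nat.lt_add_one_of_lt (Nat.lt_two_pow_self.trans_le (Nat.ge_two_pow_of_testBit h))

theorem Polynomial.coeff_prod_one_add_C_mul_X_pow_two_pow {R : Type*} [CommSemiring R]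
    (s : Finset ℕ) (c : ℕ → R) (n : ℕ) :
    (∏ j ∈ s, (1 + C (c j) * X ^ 2 ^ j)).coeff n =
      if n.bitIndices.toFinset ⊆ s then ∏ j ∈ n.bitIndices.toFinset, c j else 0 := by
  have binary_expansion_unique (t : Finset ℕ) : n = ∑ j ∈ t, 2 ^ j ↔ n.bitIndices.toFinset = t :=
    Finset.equivBitIndices.eq_symm_apply
  simp only [Finset.prod_one_add, finsetSum_coeff, Finset.prod_mul_distrib, ← map_prod,
    Finset.prod_pow_eq_pow_sum, coeff_C_mul_X_pow, binary_expansion_unique, Finset.sum_ite_eq,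
    Finset.mem_powerset]

theorem coeff_sier (R : Type*) [CommRing R] (m n : ℕ) :
    (Sier R m).coeff n = if n.bitIndices.toFinset ⊆ m.bitIndices.toFinset then 1 else 0 := by
  simpa [Sier, Finset.prod_range_ite_testBit] using
    coeff_prod_one_add_C_mul_X_pow_two_pow m.bitIndices.toFinset (fun _ ↦ (1 : R)) n

theorem coeff_sierBar (R : Type*) [CommRing R] (m n : ℕ) :
    (SierBar R m).coeff n =
      if n.bitIndices.toFinset ⊆ m.bitIndices.toFinset then (-1) ^ n.bitIndices.length else 0 := by
  simpa [SierBar, Finset.prod_range_ite_testBit, sub_eq_add_neg, List.toFinset_card_of_nodup] using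
    coeff_prod_one_add_C_mul_X_pow_two_pow m.bitIndices.toFinset (fun _ ↦ (-1 : R)) n

theorem sgn_eq_neg_one_pow_length_bitIndices (R : Type*) [CommRing R] (n : ℕ) :
    sgn R n = (-1) ^ n.bitIndices.length := by
  rw [sgn, Nat.sum_digits_two_eq_length_bitIndices]

/-- The signed Sierpiński polynomial is the termwise product of the signed
Thue–Morse sequence with the Sierpiński polynomial: for all i, the coefficient of x^i in
SierBar m equals σ i times the coefficient of x^i in Sier m, where σ i = (-1)^(H i). -/
theorem sierbar_eq_thueMorse_smul_sier (m : ℕ) :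
    ∀ i : ℕ, (SierBar ℤ m).coeff i = sgn ℤ i * (Sier ℤ m).coeff i := by
  intro i
  rw [coeff_sierBar, coeff_sier, sgn_eq_neg_one_pow_length_bitIndices]
  split_ifs <;> simp
end

section
/- Let n be a power of 2 and let f, g ∈ R[x] be polynomials of degree strictly less than n over a commutative ring R. Then f·g = Σ_{k=0}^{n−1} σ_k · S_{n−1−k} · ( (S_{n−1−k}·x^k) ⊙ (S̄_k·f) ⊙ (S̄_k·g) ). -/
/-- Termwise (Hadamard) product of polynomials. -/
noncomputable def hadP {R : Type*} [CommRing R] (p q : Polynomial R) : Polynomial R :=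
  ∑ n ∈ p.support, Polynomial.C (p.coeff n * q.coeff n) * Polynomial.X ^ n

/-!
Both sides are bilinear in `(f, g)`; induct on `t` with `n = 2 ^ t`, splitting
`f = f₀ + X^N f₁` and `g = g₀ + X^N g₁` with `N = 2 ^ t` and `deg f₀, deg g₀ < N`.
For `k < N`, the summands of index `k` and `N + k` at level `2N` are related to the level-`N`
summand through `S (2N-1-k) = (1 + X^N) S (N-1-k)`, `S̄ (N+k) = (1 - X^N) S̄ k` and
`σ (N+k) = -σ k`. Since `S (N-1-k) X^k` is supported in `[k, N)` while `S̄ k f₀` has degree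
`< N + k`, each Hadamard product only sees one block of each factor, and the two summands add up to
`a₀₀ + X^N (a₀₁ + a₁₀) + X^(2N) a₁₁`, where `aᵢⱼ` is the level-`N` summand for `(fᵢ, gⱼ)`.
Summing over `k`, this is the block expansion of `f * g`.
-/

open Polynomial Finset

local infixl:70 " ⊙ " => hadP

section Hadamard

variable {R : Type*} [CommRing R]

theorem coeff_hadP (p q : R[X]) (n : ℕ) : (p ⊙ q).coeff n = p.coeff n * q.coeff n := by
  simp only [hadP, finsetSum_coeff, coeff_C_mul_X_pow]
  rw [Finset.sum_ite_eq]
  split_ifs with hn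
  · rfl
  · rw [notMem_support_iff.mp hn, zero_mul]

theorem hadP_comm (p q : R[X]) : p ⊙ q = q ⊙ p := by
  ext n; simp only [coeff_hadP, mul_comm]

theorem hadP_add_left (p q r : R[X]) : (p + q) ⊙ r = p ⊙ r + q ⊙ r := by
  ext n; simp only [coeff_hadP, coeff_add, add_mul]

theorem hadP_sub_left (p q r : R[X]) : (p - q) ⊙ r = p ⊙ r - q ⊙ r := by
  ext n; simp only [coeff_hadP, coeff_sub, sub_mul]

theorem hadP_sub_right (p q r : R[X]) : p ⊙ (q - r) = p ⊙ q - p ⊙ r := by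
  ext n; simp only [coeff_hadP, coeff_sub, mul_sub]

theorem C_hadP_C (a b : R) : C a ⊙ C b = C (a * b) := by
  ext n; rcases eq_or_ne n 0 with rfl | hn <;> simp [coeff_hadP, coeff_C, *]

theorem X_pow_mul_hadP_X_pow_mul (c : ℕ) (p q : R[X]) :
    (X ^ c * p) ⊙ (X ^ c * q) = X ^ c * (p ⊙ q) := by
  ext n; simp only [coeff_hadP, coeff_X_pow_mul']; split_ifs <;> simp

theorem natDegree_hadP_le (p q : R[X]) : (p ⊙ q).natDegree ≤ p.natDegree :=
  natDegree_le_iff_coeff_eq_zero.mpr fun n hn => by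
    rw [coeff_hadP, coeff_eq_zero_of_natDegree_lt hn, zero_mul]

theorem X_pow_dvd_hadP {c : ℕ} {p : R[X]} (hp : X ^ c ∣ p) (q : R[X]) : X ^ c ∣ p ⊙ q :=
  X_pow_dvd_iff.mpr fun d hd => by rw [coeff_hadP, X_pow_dvd_iff.mp hp d hd, zero_mul]

theorem hadP_eq_zero_of_X_pow_dvd {c : ℕ} {p q : R[X]} (hp : X ^ c ∣ p) (hq : q.natDegree < c) :
    p ⊙ q = 0 := by
  ext n
  rw [coeff_hadP, coeff_zero]
  rcases lt_or_ge n c with hn | hn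
  · rw [X_pow_dvd_iff.mp hp n hn, zero_mul]
  · rw [coeff_eq_zero_of_natDegree_lt (hq.trans_le hn), mul_zero]

theorem hadP_add_X_pow_mul {N : ℕ} {p : R[X]} (hp : p.natDegree < N) (a b : R[X]) :
    p ⊙ (a + X ^ N * b) = p ⊙ a := by
  rw [hadP_comm, hadP_add_left, hadP_eq_zero_of_X_pow_dvd (dvd_mul_right _ _) hp, add_zero,
    hadP_comm]

theorem X_pow_mul_hadP_add_X_pow_mul {N k : ℕ} {p a : R[X]} (hp : X ^ k ∣ p)
    (ha : a.natDegree < N + k) (b : R[X]) :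
    (X ^ N * p) ⊙ (a + X ^ N * b) = X ^ N * (p ⊙ b) := by
  rw [hadP_comm, hadP_add_left, hadP_comm a, hadP_comm (X ^ N * b),
    hadP_eq_zero_of_X_pow_dvd (pow_add (X : R[X]) N k ▸ mul_dvd_mul_left _ hp) ha, zero_add,
    X_pow_mul_hadP_X_pow_mul, hadP_comm]

end Hadamard

section Blocks

variable {R : Type*} [CommRing R] {N k : ℕ} {p : R[X]}

theorem one_add_X_pow_mul_hadP_hadP (hk : X ^ k ∣ p) (hp : p.natDegree < N) {a₀ b₀ : R[X]}
    (ha₀ : a₀.natDegree < N + k) (hb₀ : b₀.natDegree < N + k) (a₁ b₁ : R[X]) :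
    ((1 + X ^ N) * p) ⊙ (a₀ + X ^ N * a₁) ⊙ (b₀ + X ^ N * b₁)
      = p ⊙ a₀ ⊙ b₀ + X ^ N * (p ⊙ a₁ ⊙ b₁) := by
  rw [add_mul, one_mul, hadP_add_left, hadP_add_X_pow_mul hp,
    X_pow_mul_hadP_add_X_pow_mul hk ha₀, hadP_add_left,
    hadP_add_X_pow_mul ((natDegree_hadP_le _ _).trans_lt hp),
    X_pow_mul_hadP_add_X_pow_mul (X_pow_dvd_hadP hk _) hb₀]

theorem X_pow_mul_hadP_one_sub_X_pow_mul (hk : X ^ k ∣ p) (hp : p.natDegree < N) {a₀ : R[X]}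
    (ha₀ : a₀.natDegree < N + k) (a₁ : R[X]) :
    (X ^ N * p) ⊙ ((1 - X ^ N) * (a₀ + X ^ N * a₁)) = X ^ N * (p ⊙ (a₁ - a₀)) := by
  rw [show (1 - X ^ N) * (a₀ + X ^ N * a₁) = a₀ + X ^ N * ((a₁ - a₀) + X ^ N * -a₁) by ring,
    X_pow_mul_hadP_add_X_pow_mul hk ha₀, hadP_add_X_pow_mul hp]

theorem X_pow_mul_hadP_hadP_one_sub_X_pow_mul (hk : X ^ k ∣ p) (hp : p.natDegree < N)
    {a₀ b₀ : R[X]} (ha₀ : a₀.natDegree < N + k) (hb₀ : b₀.natDegree < N + k) (a₁ b₁ : R[X]) :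
    (X ^ N * p) ⊙ ((1 - X ^ N) * (a₀ + X ^ N * a₁)) ⊙ ((1 - X ^ N) * (b₀ + X ^ N * b₁))
      = X ^ N * (p ⊙ (a₁ - a₀) ⊙ (b₁ - b₀)) := by
  rw [X_pow_mul_hadP_one_sub_X_pow_mul hk hp ha₀,
    X_pow_mul_hadP_one_sub_X_pow_mul (X_pow_dvd_hadP hk _)
      ((natDegree_hadP_le _ _).trans_lt hp) hb₀]

end Blocks

section BinaryProduct

variable {M : Type*} [CommMonoid M] (G : ℕ → M)

def bitProd (m : ℕ) : M := ∏ j ∈ range (m + 1), if m.testBit j then G j else 1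

theorem bitProd_eq_prod_range {m c : ℕ} (h : m < 2 ^ c) :
    bitProd G m = ∏ j ∈ range c, if m.testBit j then G j else 1 := by
  have key : ∀ {a b : ℕ}, a ≤ b → m < 2 ^ a →
      ∏ j ∈ range a, (if m.testBit j then G j else 1)
        = ∏ j ∈ range b, (if m.testBit j then G j else 1) := fun hab hm =>
    prod_subset (range_subset_range.mpr hab) fun j _ hj => by
      rw [Nat.testBit_eq_false_of_lt
        (hm.trans_le (Nat.pow_le_pow_right two_pos (not_lt.mp (mem_range.not.mp hj))))]
      rfl
  have hm : m < 2 ^ (m + 1) := Nat.lt_two_pow_self.trans (Nat.pow_lt_pow_succ one_lt_two)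
  rcases le_total (m + 1) c with hc | hc
  · exact key hc hm
  · exact (key hc h).symm

@[simp]
theorem bitProd_zero : bitProd G 0 = 1 := by simp [bitProd]

theorem bitProd_two_pow_add {t k : ℕ} (hk : k < 2 ^ t) :
    bitProd G (2 ^ t + k) = G t * bitProd G k := by
  have h : 2 ^ t + k < 2 ^ (t + 1) := by rw [pow_succ]; omega
  rw [bitProd_eq_prod_range G h, prod_range_succ, bitProd_eq_prod_range G hk, mul_comm,
    Nat.testBit_two_pow_add_eq, Nat.testBit_eq_false_of_lt hk]
  congr 1
  exact prod_congr rfl fun j hj => by rw [Nat.testBit_two_pow_add_gt (mem_range.mp hj)]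

theorem exists_eq_two_pow_add {m : ℕ} (hm : m ≠ 0) : ∃ t k, k < 2 ^ t ∧ m = 2 ^ t + k := by
  refine ⟨Nat.log 2 m, m - 2 ^ Nat.log 2 m, ?_, ?_⟩
  · have := Nat.lt_pow_succ_log_self one_lt_two m
    rw [pow_succ] at this
    omega
  · have := Nat.pow_log_le_self 2 hm
    omega

end BinaryProduct

theorem natDegree_bitProd_le {R : Type*} [CommRing R] (G : ℕ → R[X])
    (hG : ∀ j, (G j).natDegree ≤ 2 ^ j) (m : ℕ) : (bitProd G m).natDegree ≤ m := by
  induction m using Nat.strong_induction_on with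
  | _ m ih =>
    rcases eq_or_ne m 0 with rfl | hm
    · simp
    obtain ⟨t, k, hk, rfl⟩ := exists_eq_two_pow_add hm
    rw [bitProd_two_pow_add G hk]
    exact natDegree_mul_le.trans (add_le_add (hG t) (ih k (by omega)))

section Sierpinski

variable {R : Type*} [CommRing R]

theorem Sier_two_pow_add {t k : ℕ} (hk : k < 2 ^ t) :
    Sier R (2 ^ t + k) = (1 + X ^ 2 ^ t) * Sier R k :=
  bitProd_two_pow_add _ hk

theorem SierBar_two_pow_add {t k : ℕ} (hk : k < 2 ^ t) :
    SierBar R (2 ^ t + k) = (1 - X ^ 2 ^ t) * SierBar R k :=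
  bitProd_two_pow_add _ hk

theorem Sier_zero : Sier R 0 = 1 := bitProd_zero _

theorem SierBar_zero : SierBar R 0 = 1 := bitProd_zero _

theorem sgn_zero : sgn R 0 = 1 := by simp [sgn]

theorem natDegree_Sier_le (m : ℕ) : (Sier R m).natDegree ≤ m :=
  natDegree_bitProd_le _ (fun j => (natDegree_add_le _ _).trans (by simp [natDegree_X_pow_le])) m

theorem natDegree_SierBar_le (m : ℕ) : (SierBar R m).natDegree ≤ m :=
  natDegree_bitProd_le _ (fun j => (natDegree_sub_le _ _).trans (by simp [natDegree_X_pow_le])) m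

theorem sgn_two_pow_add {t k : ℕ} (hk : k < 2 ^ t) : sgn R (2 ^ t + k) = -sgn R k := by
  have hlen := (Nat.digits_length_le_iff one_lt_two k).mpr hk
  have h := Nat.digits_append_zeroes_append_digits (k := t - (Nat.digits 2 k).length)
    (n := k) one_lt_two one_pos
  rw [Nat.add_sub_cancel' hlen, mul_one, add_comm] at h
  rw [sgn, sgn, ← h]
  simp [pow_succ]

end Sierpinski

section Convolution

variable (R : Type*) [CommRing R]

noncomputable def sierTerm (n k : ℕ) (f g : R[X]) : R[X] :=
  sgn R k • (Sier R (n - 1 - k) *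
    ((Sier R (n - 1 - k) * X ^ k) ⊙ (SierBar R k * f) ⊙ (SierBar R k * g)))

noncomputable def sierConv (n : ℕ) (f g : R[X]) : R[X] :=
  ∑ k ∈ range n, sierTerm R n k f g

variable {R}

theorem sierTerm_add_sierTerm {t k : ℕ} (hk : k < 2 ^ t) {f₀ g₀ : R[X]}
    (hf₀ : f₀.natDegree < 2 ^ t) (hg₀ : g₀.natDegree < 2 ^ t) (f₁ g₁ : R[X]) :
    sierTerm R (2 ^ (t + 1)) k (f₀ + X ^ 2 ^ t * f₁) (g₀ + X ^ 2 ^ t * g₁)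
      + sierTerm R (2 ^ (t + 1)) (2 ^ t + k) (f₀ + X ^ 2 ^ t * f₁) (g₀ + X ^ 2 ^ t * g₁)
      = sierTerm R (2 ^ t) k f₀ g₀
        + X ^ 2 ^ t * (sierTerm R (2 ^ t) k f₀ g₁ + sierTerm R (2 ^ t) k f₁ g₀)
        + X ^ 2 ^ t * X ^ 2 ^ t * sierTerm R (2 ^ t) k f₁ g₁ := by
  have hSbarN := SierBar_two_pow_add (R := R) hk
  have hsgnN := sgn_two_pow_add (R := R) hk
  set N := 2 ^ t
  have hN : 2 ^ (t + 1) = N + N := by rw [pow_succ, mul_two]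
  set Q := Sier R (N - 1 - k)
  set P := Q * X ^ k
  have hP : P.natDegree < N :=
    natDegree_mul_le.trans_lt ((add_le_add (natDegree_Sier_le _) (natDegree_X_pow_le k)).trans_lt
      (by omega))
  have hSbar {h : R[X]} (hh : h.natDegree < N) : (SierBar R k * h).natDegree < N + k :=
    natDegree_mul_le.trans_lt (by have := natDegree_SierBar_le (R := R) k; omega)
  have hlow : Sier R (2 ^ (t + 1) - 1 - k) = (1 + X ^ N) * Q := by
    rw [hN, show N + N - 1 - k = N + (N - 1 - k) by omega, Sier_two_pow_add (by omega)]
  have hhigh : Sier R (2 ^ (t + 1) - 1 - (N + k)) = Q := by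
    rw [hN, show N + N - 1 - (N + k) = N - 1 - k by omega]
  have hsplit (h₀ h₁ : R[X]) :
      SierBar R k * (h₀ + X ^ N * h₁) = SierBar R k * h₀ + X ^ N * (SierBar R k * h₁) := by ring
  have hsplit' (h₀ h₁ : R[X]) : (1 - X ^ N) * SierBar R k * (h₀ + X ^ N * h₁)
      = (1 - X ^ N) * (SierBar R k * h₀ + X ^ N * (SierBar R k * h₁)) := by ring
  simp only [sierTerm, hlow, hhigh, hSbarN, hsgnN, hsplit, hsplit']
  rw [mul_assoc (1 + X ^ N) Q (X ^ k), pow_add, mul_left_comm Q,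
    one_add_X_pow_mul_hadP_hadP (dvd_mul_left _ _) hP (hSbar hf₀) (hSbar hg₀),
    X_pow_mul_hadP_hadP_one_sub_X_pow_mul (dvd_mul_left _ _) hP (hSbar hf₀) (hSbar hg₀)]
  simp only [hadP_sub_left, hadP_sub_right, smul_eq_C_mul, map_neg]
  ring

theorem sierConv_two_pow_succ {t : ℕ} {f₀ g₀ : R[X]} (hf₀ : f₀.natDegree < 2 ^ t)
    (hg₀ : g₀.natDegree < 2 ^ t) (f₁ g₁ : R[X]) :
    sierConv R (2 ^ (t + 1)) (f₀ + X ^ 2 ^ t * f₁) (g₀ + X ^ 2 ^ t * g₁)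
      = sierConv R (2 ^ t) f₀ g₀
        + X ^ 2 ^ t * (sierConv R (2 ^ t) f₀ g₁ + sierConv R (2 ^ t) f₁ g₀)
        + X ^ 2 ^ t * X ^ 2 ^ t * sierConv R (2 ^ t) f₁ g₁ := by
  have hN : 2 ^ (t + 1) = 2 ^ t + 2 ^ t := by rw [pow_succ, mul_two]
  rw [sierConv, hN, sum_range_add, ← sum_add_distrib, ← hN,
    sum_congr rfl fun k hk => sierTerm_add_sierTerm (mem_range.mp hk) hf₀ hg₀ f₁ g₁]
  simp only [sierConv, sum_add_distrib, mul_add, mul_sum]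

end Convolution

theorem exists_eq_add_X_pow_mul {R : Type*} [CommRing R] {N : ℕ} (hN : 0 < N) {f : R[X]}
    (hf : f.natDegree < N + N) :
    ∃ f₀ f₁ : R[X], f₀.natDegree < N ∧ f₁.natDegree < N ∧ f = f₀ + X ^ N * f₁ := by
  rcases subsingleton_or_nontrivial R with hR | hR
  · exact ⟨0, 0, by simpa using hN, by simpa using hN, Subsingleton.elim _ _⟩
  refine ⟨f %ₘ X ^ N, f /ₘ X ^ N, ?_, ?_, (modByMonic_add_div f _).symm⟩
  · have hX : (X ^ N : R[X]) ≠ 1 := fun h => by simpa [hN.ne'] using congrArg natDegree h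
    simpa using natDegree_modByMonic_lt f (monic_X_pow N) hX
  · rw [natDegree_divByMonic f (monic_X_pow N), natDegree_X_pow]
    omega

theorem mul_eq_sierConv {R : Type*} [CommRing R] (t : ℕ) {f g : R[X]}
    (hf : f.natDegree < 2 ^ t) (hg : g.natDegree < 2 ^ t) : f * g = sierConv R (2 ^ t) f g := by
  induction t generalizing f g with
  | zero =>
    rw [eq_C_of_natDegree_eq_zero (Nat.lt_one_iff.mp hf),
      eq_C_of_natDegree_eq_zero (Nat.lt_one_iff.mp hg)]
    simp only [sierConv, sierTerm, pow_zero, range_one, sum_singleton, tsub_self, zero_tsub,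
      Sier_zero, SierBar_zero, sgn_zero, one_mul, one_smul]
    rw [← C_1, C_hadP_C, C_hadP_C, one_mul, C_mul]
  | succ t ih =>
    rw [pow_succ, mul_two] at hf hg
    obtain ⟨f₀, f₁, hf₀, hf₁, rfl⟩ := exists_eq_add_X_pow_mul (Nat.two_pow_pos t) hf
    obtain ⟨g₀, g₁, hg₀, hg₁, rfl⟩ := exists_eq_add_X_pow_mul (Nat.two_pow_pos t) hg
    rw [sierConv_two_pow_succ hf₀ hg₀, ← ih hf₀ hg₀, ← ih hf₀ hg₁, ← ih hf₁ hg₀, ← ih hf₁ hg₁]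
    ring

/-- For n a power of 2 and polynomials f, g of degree < n,
f * g = Σ_{k=0}^{n-1} σ k * S (n-1-k) * ((S (n-1-k) * x^k) ⊙ (SBar k * f) ⊙ (SBar k * g)). -/
theorem convolution_formula_sierbar (R : Type*) [CommRing R] (n : ℕ)
    (hn : ∃ t : ℕ, n = 2 ^ t) (f g : Polynomial R)
    (hf : f.degree < n) (hg : g.degree < n) :
    f * g = ∑ k ∈ Finset.range n,
      sgn R k • (Sier R (n - 1 - k) *
        hadP (hadP (Sier R (n - 1 - k) * Polynomial.X ^ k) (SierBar R k * f))
          (SierBar R k * g)) := by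
  obtain ⟨t, rfl⟩ := hn
  have natDegree_lt {h : R[X]} (hh : h.degree < ↑(2 ^ t)) : h.natDegree < 2 ^ t := by
    rcases eq_or_ne h 0 with rfl | h0
    · exact Nat.two_pow_pos t
    · exact (natDegree_lt_iff_degree_lt h0).mpr hh
  exact mul_eq_sierConv t (natDegree_lt hf) (natDegree_lt hg)
end

section
/- For every k ∈ ℕ, the formal power series identity (1 − x) · S_k · δ_k = 1 holds in R[[x]] over any commutative ring R; that is, δ_k, the power series whose m-th coefficient is 1 if m AND k = 0 and 0 otherwise, is the multiplicative inverse of (1 − x)·S_k. -/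
/-- `δ k`: the power series whose `m`-th coefficient is `1` if `m AND k = 0`, else `0`. -/
noncomputable def delta (R : Type*) [CommRing R] (k : ℕ) : PowerSeries R :=
  PowerSeries.mk fun m => if m &&& k = 0 then 1 else 0

namespace Nat

def bitSet (n : ℕ) : Finset ℕ := n.bitIndices.toFinset

@[simp] lemma mem_bitSet {n i : ℕ} : i ∈ bitSet n ↔ n.testBit i := by
  simp [bitSet]

lemma sum_two_pow_bitSet (n : ℕ) : ∑ i ∈ bitSet n, 2 ^ i = n :=
  Finset.sum_toFinset_bitIndices_two_pow n

lemma bitSet_sum_two_pow (s : Finset ℕ) : bitSet (∑ i ∈ s, 2 ^ i) = s :=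
  Finset.toFinset_bitIndices_sum_two_pow s

lemma bitSet_injective : Function.Injective bitSet :=
  Function.LeftInverse.injective (g := fun s ↦ ∑ i ∈ s, 2 ^ i) sum_two_pow_bitSet

lemma bitSet_add_of_disjoint {a b : ℕ} (h : Disjoint (bitSet a) (bitSet b)) :
    bitSet (a + b) = bitSet a ∪ bitSet b := by
  conv_lhs => rw [← sum_two_pow_bitSet a, ← sum_two_pow_bitSet b, ← Finset.sum_union h]
  exact bitSet_sum_two_pow _

lemma bitSet_and (a b : ℕ) : bitSet (a &&& b) = bitSet a ∩ bitSet b := by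
  ext i; simp

lemma and_eq_zero_iff_disjoint_bitSet {a b : ℕ} :
    a &&& b = 0 ↔ Disjoint (bitSet a) (bitSet b) := by
  rw [← bitSet_injective.eq_iff, bitSet_and, Finset.disjoint_iff_inter_eq_empty]
  simp [bitSet]

lemma bitSet_split_iff {a b m k : ℕ} (hm : a + b = m) :
    bitSet a ⊆ bitSet k ∧ Disjoint (bitSet b) (bitSet k) ↔
      bitSet a = bitSet m ∩ bitSet k ∧ bitSet b = bitSet m \ bitSet k := by
  constructor
  · rintro ⟨hak, hbk⟩
    have hab : Disjoint (bitSet a) (bitSet b) := (hbk.mono_right hak).symm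
    rw [← hm, bitSet_add_of_disjoint hab, Finset.union_inter_distrib_right,
      Finset.inter_eq_left.mpr hak, Finset.disjoint_iff_inter_eq_empty.mp hbk, Finset.union_empty,
      Finset.union_sdiff_distrib, Finset.sdiff_eq_empty_iff_subset.mpr hak,
      Finset.empty_union, hbk.sdiff_eq_left]
    exact ⟨rfl, rfl⟩
  · rintro ⟨ha, hb⟩
    exact ⟨ha ▸ Finset.inter_subset_right, hb ▸ Finset.sdiff_disjoint⟩

end Nat

open Nat Polynomial

lemma Sier_eq_prod_bitSet (R : Type*) [CommRing R] (k : ℕ) :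
    Sier R k = ∏ j ∈ bitSet k, (1 + X ^ 2 ^ j) := by
  rw [Sier, ← Finset.prod_filter]
  congr 1
  ext j
  simp only [Finset.mem_filter, Finset.mem_range, mem_bitSet, and_iff_right_iff_imp]
  exact fun hj ↦ lt_succ_of_lt ((ge_two_pow_of_testBit hj).trans_lt' j.lt_two_pow_self)

lemma Sier_eq_sum_powerset (R : Type*) [CommRing R] (k : ℕ) :
    Sier R k = ∑ t ∈ (bitSet k).powerset, X ^ ∑ j ∈ t, 2 ^ j := by
  simp only [Sier_eq_prod_bitSet, Finset.prod_one_add, Finset.prod_pow_eq_pow_sum]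

lemma coeff_Sier (R : Type*) [CommRing R] (k n : ℕ) :
    (Sier R k).coeff n = if bitSet n ⊆ bitSet k then 1 else 0 := by
  have hsum (t : Finset ℕ) : n = ∑ j ∈ t, 2 ^ j ↔ t = bitSet n := by
    rw [← bitSet_injective.eq_iff, bitSet_sum_two_pow, eq_comm]
  simp only [Sier_eq_sum_powerset, finsetSum_coeff, coeff_X_pow, hsum,
    Finset.sum_ite_eq', Finset.mem_powerset]

lemma coeff_delta (R : Type*) [CommRing R] (k n : ℕ) :
    PowerSeries.coeff n (delta R k) = if Disjoint (bitSet n) (bitSet k) then 1 else 0 := by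
  simp only [delta, PowerSeries.coeff_mk, and_eq_zero_iff_disjoint_bitSet]

open Finset in
lemma Sier_mul_delta (R : Type*) [CommRing R] (k : ℕ) :
    (Sier R k : PowerSeries R) * delta R k = PowerSeries.mk 1 := by
  ext m
  set split : ℕ × ℕ := (∑ j ∈ bitSet m ∩ bitSet k, 2 ^ j, ∑ j ∈ bitSet m \ bitSet k, 2 ^ j)
  have hsplit : split ∈ antidiagonal m := by
    rw [HasAntidiagonal.mem_antidiagonal, sum_inter_add_sum_sdiff, sum_two_pow_bitSet]
  have hterm (x : ℕ × ℕ) (hx : x ∈ antidiagonal m) :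
      (Sier R k).coeff x.1 * PowerSeries.coeff x.2 (delta R k) = if x = split then 1 else 0 := by
    rw [coeff_Sier, coeff_delta, ite_zero_mul_ite_zero, mul_one]
    simp only [bitSet_split_iff (HasAntidiagonal.mem_antidiagonal.mp hx), split, Prod.ext_iff,
      ← bitSet_injective.eq_iff, bitSet_sum_two_pow]
  simp only [PowerSeries.coeff_mul, PowerSeries.coeff_mk, coeff_coe]
  rw [sum_congr rfl hterm, sum_ite_eq', if_pos hsplit, Pi.one_apply]

/-- In R[[x]], (1 - x) * S k * δ k = 1, i.e. δ k is the multiplicative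
inverse of the power series (1 - x) * S k. -/
theorem delta_mul_inv (R : Type*) [CommRing R] (k : ℕ) :
    (1 - PowerSeries.X) * (Sier R k : PowerSeries R) * delta R k = 1 := by
  rw [mul_assoc, Sier_mul_delta, mul_comm, PowerSeries.mk_one_mul_one_sub_eq_one]
end

section
/- For every formal power series f over a commutative ring R, the binomial modulo 2 transform and its inverse transform are mutually inverse: (f′)* = f and (f*)′ = f. -/
/-- The binomial modulo 2 transform: `f'[n] = Σ_{0≤k≤n, (n-k) AND k = 0} f[k]`. -/
noncomputable def bmt {R : Type*} [CommRing R] (f : PowerSeries R) : PowerSeries R :=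
  PowerSeries.mk fun n => ∑ k ∈ Finset.range (n + 1),
    if (n - k) &&& k = 0 then PowerSeries.coeff k f else 0

/-- The inverse binomial modulo 2 transform:
`f*[n] = Σ_{0≤k≤n, (n-k) AND k = 0} σ_{n-k}·f[k]`. -/
noncomputable def bmtInv {R : Type*} [CommRing R] (f : PowerSeries R) : PowerSeries R :=
  PowerSeries.mk fun n => ∑ k ∈ Finset.range (n + 1),
    if (n - k) &&& k = 0 then sgn R (n - k) * PowerSeries.coeff k f else 0

/-!
Identify `n` with the finite set of positions of its binary digits (`Finset.equivBitIndices`).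
Then `(n - k) &&& k = 0` says exactly that the bits of `k` form a subset of those of `n`, the bits
of `n - k` are then the set difference, and `σ_m = (-1)^(number of bits of m)`. So `f ↦ f′` and
`f ↦ f*` are the zeta and Möbius transforms of the Boolean lattice of finite sets of positions,
which are mutually inverse because `∑_{s ⊆ t ⊆ u} (-1)^|u \ t|` vanishes unless `s = u`.
-/

open Finset

theorem Finset.equivBitIndices_symm_union {s t : Finset ℕ} (h : Disjoint s t) :
    equivBitIndices.symm (s ∪ t) = equivBitIndices.symm s + equivBitIndices.symm t :=
  sum_union h

theorem Nat.and_eq_zero_iff_disjoint_equivBitIndices {a b : ℕ} :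
    a &&& b = 0 ↔ Disjoint (equivBitIndices a) (equivBitIndices b) := by
  simp only [disjoint_left, equivBitIndices_apply, List.mem_toFinset, mem_bitIndices]
  refine ⟨fun h i ha hb => by simpa [ha, hb] using congrArg (testBit · i) h,
    fun h => eq_of_testBit_eq fun i => ?_⟩
  cases ha : a.testBit i
  · simp [ha]
  · simp [h ha]

theorem Finset.equivBitIndices_add {a b : ℕ} (h : a &&& b = 0) :
    equivBitIndices (a + b) = equivBitIndices a ∪ equivBitIndices b := by
  rw [Nat.and_eq_zero_iff_disjoint_equivBitIndices] at h
  rw [← equivBitIndices.apply_symm_apply (_ ∪ _), equivBitIndices_symm_union h]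
  simp

theorem Finset.equivBitIndices_symm_sdiff_add {k n : ℕ}
    (h : equivBitIndices k ⊆ equivBitIndices n) :
    equivBitIndices.symm (equivBitIndices n \ equivBitIndices k) + k = n := by
  have := equivBitIndices_symm_union
    (sdiff_disjoint (s := equivBitIndices k) (t := equivBitIndices n))
  rwa [sdiff_union_of_subset h, Equiv.symm_apply_apply, Equiv.symm_apply_apply, eq_comm] at this

theorem Finset.equivBitIndices_sub {k n : ℕ} (h : equivBitIndices k ⊆ equivBitIndices n) :
    equivBitIndices (n - k) = equivBitIndices n \ equivBitIndices k := by
  conv_lhs => rw [← equivBitIndices_symm_sdiff_add h, Nat.add_sub_cancel, Equiv.apply_symm_apply]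

theorem Nat.le_and_sub_and_eq_zero_iff_equivBitIndices_subset {k n : ℕ} :
    k ≤ n ∧ (n - k) &&& k = 0 ↔ equivBitIndices k ⊆ equivBitIndices n := by
  refine ⟨fun ⟨hkn, hd⟩ => ?_, fun h => ⟨?_, ?_⟩⟩
  · rw [← Nat.sub_add_cancel hkn, equivBitIndices_add hd]
    exact subset_union_right
  · exact (equivBitIndices_symm_sdiff_add h).le.trans' (le_add_left _ _)
  · rw [and_eq_zero_iff_disjoint_equivBitIndices, equivBitIndices_sub h]
    exact sdiff_disjoint

theorem Nat.sum_digits_two_eq_card_equivBitIndices (n : ℕ) :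
    (digits 2 n).sum = #(equivBitIndices n) := by
  rw [equivBitIndices_apply, List.toFinset_card_of_nodup bitIndices_nodup]
  induction n using Nat.strong_induction_on with | _ n ih => ?_
  rcases n.eq_zero_or_pos with rfl | hn
  · simp
  rw [digits_def' one_lt_two hn, List.sum_cons, ih _ (div_lt_self hn one_lt_two)]
  rcases mod_two_eq_zero_or_one n with h | h
  · conv_rhs => rw [← div_add_mod n 2, h, add_zero, bitIndices_two_mul]
    simp [h]
  · conv_rhs => rw [← div_add_mod n 2, h, bitIndices_two_mul_add_one]
    simp [h, add_comm]

namespace Finset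

variable {α R : Type*} [DecidableEq α] [Ring R]

theorem sum_powerset_sdiff_neg_one_pow_card {s u : Finset α} (hsu : s ⊆ u) :
    ∑ v ∈ (u \ s).powerset, (-1 : R) ^ #v = if s = u then 1 else 0 := by
  have := congrArg (Int.cast : ℤ → R) (sum_powerset_neg_one_pow_card (x := u \ s))
  push_cast at this
  simp_rw [this, sdiff_eq_empty_iff_subset, ← subset_antisymm_iff.trans (and_iff_right hsu)]

theorem sum_Icc_neg_one_pow_card_sdiff_left (s u : Finset α) :
    ∑ t ∈ Icc s u, (-1 : R) ^ #(t \ s) = if s = u then 1 else 0 := by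
  by_cases hsu : s ⊆ u
  · rw [← sum_powerset_sdiff_neg_one_pow_card hsu]
    refine sum_nbij' (· \ s) (· ∪ s) ?_ ?_ ?_ ?_ fun _ _ => rfl <;>
      simp only [mem_Icc, mem_powerset]
    · exact fun t ht => sdiff_subset_sdiff ht.2 subset_rfl
    · exact fun v hv => ⟨subset_union_right, union_subset (hv.trans sdiff_subset) hsu⟩
    · exact fun t ht => sdiff_union_of_subset ht.1
    · exact fun v hv => union_sdiff_cancel_right (disjoint_of_subset_left hv sdiff_disjoint)
  · rw [Icc_eq_empty (by simpa using hsu), sum_empty, if_neg (by rintro rfl; exact hsu subset_rfl)]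

theorem sum_Icc_neg_one_pow_card_sdiff_right (s u : Finset α) :
    ∑ t ∈ Icc s u, (-1 : R) ^ #(u \ t) = if s = u then 1 else 0 := by
  by_cases hsu : s ⊆ u
  · rw [← sum_powerset_sdiff_neg_one_pow_card hsu]
    refine sum_nbij' (u \ ·) (u \ ·) ?_ ?_ ?_ ?_ fun _ _ => rfl <;>
      simp only [mem_Icc, mem_powerset]
    · exact fun t ht => sdiff_subset_sdiff subset_rfl ht.1
    · exact fun v hv =>
        ⟨subset_sdiff.2 ⟨hsu, (disjoint_of_subset_left hv sdiff_disjoint).symm⟩, sdiff_subset⟩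
    · exact fun t ht => sdiff_sdiff_eq_self ht.2
    · exact fun v hv => sdiff_sdiff_eq_self (hv.trans sdiff_subset)
  · rw [Icc_eq_empty (by simpa using hsu), sum_empty, if_neg (by rintro rfl; exact hsu subset_rfl)]

theorem sum_powerset_sum_powerset_eq_sum_powerset_sum_Icc {M : Type*} [AddCommMonoid M]
    (G : Finset α → Finset α → M) (u : Finset α) :
    ∑ t ∈ u.powerset, ∑ s ∈ t.powerset, G t s = ∑ s ∈ u.powerset, ∑ t ∈ Icc s u, G t s := by
  refine sum_comm' fun t s => ?_
  simp only [mem_powerset, mem_Icc]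
  exact ⟨fun ⟨htu, hst⟩ => ⟨⟨hst, htu⟩, hst.trans htu⟩, fun ⟨⟨hst, htu⟩, _⟩ => ⟨htu, hst⟩⟩

theorem sum_powerset_sum_powerset_neg_one_pow_card_sdiff (F : Finset α → R) (u : Finset α) :
    ∑ t ∈ u.powerset, ∑ s ∈ t.powerset, (-1) ^ #(t \ s) * F s = F u := by
  simp_rw [sum_powerset_sum_powerset_eq_sum_powerset_sum_Icc, ← sum_mul,
    sum_Icc_neg_one_pow_card_sdiff_left, ite_mul, one_mul, zero_mul]
  simp

theorem sum_powerset_neg_one_pow_card_sdiff_mul_sum_powerset (F : Finset α → R) (u : Finset α) :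
    ∑ t ∈ u.powerset, (-1) ^ #(u \ t) * ∑ s ∈ t.powerset, F s = F u := by
  simp_rw [mul_sum, sum_powerset_sum_powerset_eq_sum_powerset_sum_Icc, ← sum_mul,
    sum_Icc_neg_one_pow_card_sdiff_right, ite_mul, one_mul, zero_mul]
  simp

end Finset

theorem sgn_eq_neg_one_pow_card (R : Type*) [CommRing R] (n : ℕ) :
    sgn R n = (-1) ^ #(equivBitIndices n) := by
  rw [sgn, Nat.sum_digits_two_eq_card_equivBitIndices]

theorem sum_range_ite_sub_and_eq_zero_eq_sum_powerset {M : Type*} [AddCommMonoid M]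
    (g : ℕ → M) (n : ℕ) :
    ∑ k ∈ range (n + 1), (if (n - k) &&& k = 0 then g k else 0) =
      ∑ s ∈ (equivBitIndices n).powerset, g (equivBitIndices.symm s) := by
  rw [← sum_filter]
  refine sum_equiv equivBitIndices (fun k => ?_) (fun k _ => by simp)
  simp [mem_filter, Nat.le_and_sub_and_eq_zero_iff_equivBitIndices_subset]

section PowerSeries

variable {R : Type*} [CommRing R]

theorem coeff_bmt (f : PowerSeries R) (n : ℕ) :
    PowerSeries.coeff n (bmt f) =
      ∑ s ∈ (equivBitIndices n).powerset, PowerSeries.coeff (equivBitIndices.symm s) f := by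
  rw [bmt, PowerSeries.coeff_mk, sum_range_ite_sub_and_eq_zero_eq_sum_powerset]

theorem coeff_bmtInv (f : PowerSeries R) (n : ℕ) :
    PowerSeries.coeff n (bmtInv f) = ∑ s ∈ (equivBitIndices n).powerset,
      (-1) ^ #(equivBitIndices n \ s) * PowerSeries.coeff (equivBitIndices.symm s) f := by
  rw [bmtInv, PowerSeries.coeff_mk, sum_range_ite_sub_and_eq_zero_eq_sum_powerset]
  refine sum_congr rfl fun s hs => ?_
  rw [sgn_eq_neg_one_pow_card, equivBitIndices_sub (by simpa using hs), Equiv.apply_symm_apply]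

end PowerSeries

/-- The binomial modulo 2 transform and its inverse are mutually inverse:
(f')* = f and (f*)' = f. -/
theorem bmt_bmtInv_inverse (R : Type*) [CommRing R] (f : PowerSeries R) :
    bmtInv (bmt f) = f ∧ bmt (bmtInv f) = f := by
  constructor <;> ext n
  · simp_rw [coeff_bmtInv, coeff_bmt, Equiv.apply_symm_apply]
    rw [sum_powerset_neg_one_pow_card_sdiff_mul_sum_powerset
      (fun s => PowerSeries.coeff (equivBitIndices.symm s) f), Equiv.symm_apply_apply]
  · simp_rw [coeff_bmt, coeff_bmtInv, Equiv.apply_symm_apply]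
    rw [sum_powerset_sum_powerset_neg_one_pow_card_sdiff
      (fun s => PowerSeries.coeff (equivBitIndices.symm s) f), Equiv.symm_apply_apply]
end

section
/- Let n be a power of 2, let g be a formal power series over a commutative ring R, and let m ∈ ℕ satisfy m mod 2n ≥ n. Then the coefficient of x^m in (1 + x^n)·(g*) equals the coefficient of x^{m−n} in (g_n)*, where g_n is the series g shifted by n and * denotes the inverse binomial modulo 2 transform. -/
/-- `f_k`: the power series `f` shifted by `k`, i.e. `Σ_{n≥0} f[k+n] x^n`. -/
noncomputable def shiftS {R : Type*} [CommRing R] (k : ℕ) (f : PowerSeries R) : PowerSeries R :=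
  PowerSeries.mk fun n => PowerSeries.coeff (k + n) f

/-!
Write `n = 2 ^ t`. The hypothesis on `m` says that bit `t` of `m` is set, so `m = n + m'` with
`n &&& m' = 0`. The terms of `g*[m]` are indexed by the carry-free splittings `a + b = m`
(`a &&& b = 0`), and these arise from the carry-free splittings of `m'` by adding `n` to exactly
one of the two parts. The splittings `(n + a, b)` contribute `σ (n + a) = -σ a`, i.e. `-g*[m']`,
which cancels the term `g*[m']` coming from `x ^ n * g*`; the splittings `(a, n + b)` contribute
exactly `(g_n)*[m']`.
-/

open Finset PowerSeries

namespace Nat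

-- Transported from `BitVec` at a width where neither `a + b` nor `a ||| b` overflows.
theorem add_eq_or_of_and_eq_zero {a b : ℕ} (h : a &&& b = 0) : a + b = a ||| b := by
  have hlt {x : ℕ} (hx : x ≤ a + b) : x < 2 ^ (a + b) :=
    x.lt_two_pow_self.trans_le (Nat.pow_le_pow_right two_pos hx)
  have ha := hlt (le_add_right a b)
  have hb := hlt (le_add_left b a)
  have hand : BitVec.ofNat (a + b) a &&& BitVec.ofNat (a + b) b = 0#(a + b) := by
    apply BitVec.eq_of_toNat_eq
    simp [Nat.mod_eq_of_lt ha, Nat.mod_eq_of_lt hb, h]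
  have := (BitVec.toNat_add_of_and_eq_zero hand).symm.trans
    (congrArg BitVec.toNat (BitVec.add_eq_or_of_and_eq_zero _ _ hand))
  simpa [Nat.mod_eq_of_lt ha, Nat.mod_eq_of_lt hb] using this

theorem and_add_eq_zero_iff {x a b : ℕ} (h : a &&& b = 0) :
    x &&& (a + b) = 0 ↔ x &&& a = 0 ∧ x &&& b = 0 := by
  rw [add_eq_or_of_and_eq_zero h, and_or_distrib_left, or_eq_zero_iff]

theorem add_and_eq_zero_iff {x a b : ℕ} (h : a &&& b = 0) :
    (a + b) &&& x = 0 ↔ a &&& x = 0 ∧ b &&& x = 0 := by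
  rw [add_eq_or_of_and_eq_zero h, and_or_distrib_right, or_eq_zero_iff]

theorem two_pow_and_eq_zero_iff {x t : ℕ} : 2 ^ t &&& x = 0 ↔ x.testBit t = false := by
  simp [two_pow_and]

theorem exists_eq_two_pow_add_of_testBit {x t : ℕ} (h : x.testBit t = true) :
    ∃ y, 2 ^ t &&& y = 0 ∧ x = 2 ^ t + y := by
  have hdisj : 2 ^ t &&& (x ^^^ 2 ^ t) = 0 := by
    simp [two_pow_and_eq_zero_iff, h]
  refine ⟨x ^^^ 2 ^ t, hdisj, ?_⟩
  rw [add_eq_or_of_and_eq_zero hdisj]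
  apply eq_of_testBit_eq
  intro i
  by_cases hi : t = i
  · subst hi; simp [h]
  · simp [hi]

theorem testBit_of_two_pow_le_mod {m t : ℕ} (h : 2 ^ t ≤ m % 2 ^ (t + 1)) :
    m.testBit t = true := by
  have := testBit_of_two_pow_le_and_two_pow_add_one_gt h (mod_lt _ (Nat.two_pow_pos _))
  simpa using this

theorem sum_digits_two_eq (n : ℕ) : (digits 2 n).sum = n % 2 + (digits 2 (n / 2)).sum := by
  rcases n.eq_zero_or_pos with rfl | hn
  · simp
  · simp [digits_def' one_lt_two hn]

theorem sum_digits_two_add_of_and_eq_zero {a b : ℕ} (h : a &&& b = 0) :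
    (digits 2 (a + b)).sum = (digits 2 a).sum + (digits 2 b).sum := by
  induction a using Nat.strong_induction_on generalizing b with
  | _ a ih =>
  rcases a.eq_zero_or_pos with rfl | ha
  · simp
  have hlow : a % 2 = 0 ∨ b % 2 = 0 := by
    have := and_mod_two_eq_one (a := a) (b := b)
    simp only [h, zero_mod] at this
    omega
  have hhigh : a / 2 &&& b / 2 = 0 := by
    simpa [h] using (and_div_two_pow (a := a) (b := b) (n := 1)).symm
  rw [sum_digits_two_eq (a + b), sum_digits_two_eq a, sum_digits_two_eq b,
    show (a + b) / 2 = a / 2 + b / 2 by omega, ih _ (by omega) hhigh]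
  omega

theorem sum_digits_two_two_pow (t : ℕ) : (digits 2 (2 ^ t)).sum = 1 := by
  simpa using congrArg List.sum (digits_base_pow_mul (k := t) one_lt_two one_pos)

end Nat

section Sign

variable (R : Type*) [CommRing R]

theorem sgn_add_of_and_eq_zero {a b : ℕ} (h : a &&& b = 0) :
    sgn R (a + b) = sgn R a * sgn R b := by
  rw [sgn, sgn, sgn, Nat.sum_digits_two_add_of_and_eq_zero h, pow_add]

theorem sgn_two_pow (t : ℕ) : sgn R (2 ^ t) = -1 := by
  rw [sgn, Nat.sum_digits_two_two_pow, pow_one]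

end Sign

def carryFreeAntidiagonal (m : ℕ) : Finset (ℕ × ℕ) :=
  (antidiagonal m).filter fun p => p.1 &&& p.2 = 0

@[simp]
theorem mem_carryFreeAntidiagonal {m : ℕ} {p : ℕ × ℕ} :
    p ∈ carryFreeAntidiagonal m ↔ p.1 + p.2 = m ∧ p.1 &&& p.2 = 0 := by
  simp [carryFreeAntidiagonal]

theorem swap_mem_carryFreeAntidiagonal {m : ℕ} {p : ℕ × ℕ} :
    p.swap ∈ carryFreeAntidiagonal m ↔ p ∈ carryFreeAntidiagonal m := by
  simp [add_comm, Nat.land_comm]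

theorem and_eq_zero_of_mem_carryFreeAntidiagonal {x m : ℕ} {p : ℕ × ℕ}
    (hm : x &&& m = 0) (hp : p ∈ carryFreeAntidiagonal m) :
    x &&& p.1 = 0 ∧ x &&& p.2 = 0 := by
  rw [mem_carryFreeAntidiagonal] at hp
  rwa [← Nat.and_add_eq_zero_iff hp.2, hp.1]

theorem mk_add_mem_carryFreeAntidiagonal_add_iff {x m a b : ℕ} (hm : x &&& m = 0)
    (ha : x &&& a = 0) :
    (x + a, b) ∈ carryFreeAntidiagonal (x + m) ↔ (a, b) ∈ carryFreeAntidiagonal m := by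
  simp only [mem_carryFreeAntidiagonal, add_assoc, Nat.add_left_cancel_iff,
    Nat.add_and_eq_zero_iff ha]
  refine ⟨fun h => ⟨h.1, h.2.2⟩, fun h => ⟨h.1, ?_, h.2⟩⟩
  exact (and_eq_zero_of_mem_carryFreeAntidiagonal hm (p := (a, b)) (by simpa using h)).2

theorem mem_carryFreeAntidiagonal_two_pow_add {t m a b : ℕ} (hm : 2 ^ t &&& m = 0) :
    (a, b) ∈ carryFreeAntidiagonal (2 ^ t + m) ↔
      (∃ a', (a', b) ∈ carryFreeAntidiagonal m ∧ 2 ^ t + a' = a) ∨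
      (∃ b', (a, b') ∈ carryFreeAntidiagonal m ∧ 2 ^ t + b' = b) := by
  constructor
  · intro h
    have hbit : (a ||| b).testBit t = true := by
      rw [mem_carryFreeAntidiagonal] at h
      rw [← Nat.add_eq_or_of_and_eq_zero h.2, h.1, Nat.testBit_two_pow_add_eq,
        Nat.two_pow_and_eq_zero_iff.1 hm, Bool.not_false]
    rcases (by simpa using hbit : a.testBit t ∨ b.testBit t) with ha | hb
    · obtain ⟨a', ha', rfl⟩ := Nat.exists_eq_two_pow_add_of_testBit ha
      exact .inl ⟨a', (mk_add_mem_carryFreeAntidiagonal_add_iff hm ha').1 h, rfl⟩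
    · obtain ⟨b', hb', rfl⟩ := Nat.exists_eq_two_pow_add_of_testBit hb
      have h' := (mk_add_mem_carryFreeAntidiagonal_add_iff hm hb').1
        (swap_mem_carryFreeAntidiagonal.2 h)
      exact .inr ⟨b', (swap_mem_carryFreeAntidiagonal (p := (a, b'))).1 h', rfl⟩
  · rintro (⟨a', h, rfl⟩ | ⟨b', h, rfl⟩)
    · exact (mk_add_mem_carryFreeAntidiagonal_add_iff hm
        (and_eq_zero_of_mem_carryFreeAntidiagonal hm h).1).2 h
    · refine (swap_mem_carryFreeAntidiagonal (p := (a, 2 ^ t + b'))).1 ?_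
      exact (mk_add_mem_carryFreeAntidiagonal_add_iff hm
        (and_eq_zero_of_mem_carryFreeAntidiagonal hm h).2).2
        (swap_mem_carryFreeAntidiagonal.2 h)

theorem sum_carryFreeAntidiagonal_two_pow_add {M : Type*} [AddCommMonoid M] {t m : ℕ}
    (hm : 2 ^ t &&& m = 0) (F : ℕ → ℕ → M) :
    ∑ p ∈ carryFreeAntidiagonal (2 ^ t + m), F p.1 p.2 =
      ∑ p ∈ carryFreeAntidiagonal m, F (2 ^ t + p.1) p.2 +
        ∑ p ∈ carryFreeAntidiagonal m, F p.1 (2 ^ t + p.2) := by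
  set eL := (addLeftEmbedding (2 ^ t)).prodMap (Function.Embedding.refl ℕ)
  set eR := (Function.Embedding.refl ℕ).prodMap (addLeftEmbedding (2 ^ t))
  have hsplit : carryFreeAntidiagonal (2 ^ t + m) =
      (carryFreeAntidiagonal m).map eL ∪ (carryFreeAntidiagonal m).map eR := by
    ext ⟨a, b⟩
    rw [mem_carryFreeAntidiagonal_two_pow_add hm]
    simp [eL, eR]
  have hdisj :
      Disjoint ((carryFreeAntidiagonal m).map eL) ((carryFreeAntidiagonal m).map eR) := by
    rw [disjoint_left]
    intro x hxL hxR
    obtain ⟨p, hp, rfl⟩ := mem_map.1 hxL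
    obtain ⟨q, hq, hqp⟩ := mem_map.1 hxR
    obtain ⟨-, hq₂⟩ := and_eq_zero_of_mem_carryFreeAntidiagonal hm hq
    have hp₂ := (and_eq_zero_of_mem_carryFreeAntidiagonal hm hp).2
    have hpq : p.2 = 2 ^ t + q.2 := (congrArg Prod.snd hqp).symm
    rw [hpq] at hp₂
    simpa using ((Nat.and_add_eq_zero_iff hq₂).1 hp₂).1
  rw [hsplit, sum_union hdisj, sum_map, sum_map]
  rfl

section PowerSeries

variable {R : Type*} [CommRing R]

theorem coeff_bmtInv_s14 (f : R⟦X⟧) (m : ℕ) :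
    coeff m (bmtInv f) = ∑ p ∈ carryFreeAntidiagonal m, sgn R p.1 * coeff p.2 f := by
  rw [bmtInv, coeff_mk, carryFreeAntidiagonal, sum_filter, ← Nat.sum_antidiagonal_swap,
    Nat.sum_antidiagonal_eq_sum_range_succ_mk]
  rfl

theorem coeff_shiftS (k n : ℕ) (f : R⟦X⟧) : coeff n (shiftS k f) = coeff (k + n) f :=
  coeff_mk _ _

end PowerSeries

/-- Let n be a power of 2, g a power series and m with m mod 2n ≥ n. Then
the coefficient of x^m in (1 + x^n) * g* equals the coefficient of x^(m-n) in (g_n)*. -/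
theorem bmtInv_shift_coeff (R : Type*) [CommRing R] (n : ℕ) (hn : ∃ t : ℕ, n = 2 ^ t)
    (g : PowerSeries R) (m : ℕ) (hm : n ≤ m % (2 * n)) :
    PowerSeries.coeff m ((1 + PowerSeries.X ^ n) * bmtInv g) =
      PowerSeries.coeff (m - n) (bmtInv (shiftS n g)) := by
  obtain ⟨t, rfl⟩ := hn
  have hbit : m.testBit t = true := Nat.testBit_of_two_pow_le_mod (by rwa [pow_succ'])
  obtain ⟨m', hdisj, rfl⟩ := Nat.exists_eq_two_pow_add_of_testBit hbit
  have hsgn : ∀ p ∈ carryFreeAntidiagonal m', sgn R (2 ^ t + p.1) * coeff p.2 g =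
      -(sgn R p.1 * coeff p.2 g) := fun p hp => by
    rw [sgn_add_of_and_eq_zero R (and_eq_zero_of_mem_carryFreeAntidiagonal hdisj hp).1,
      sgn_two_pow]
    ring
  rw [add_mul, one_mul, map_add, add_comm (2 ^ t) m', coeff_X_pow_mul, Nat.add_sub_cancel,
    add_comm m', coeff_bmtInv_s14, coeff_bmtInv_s14, coeff_bmtInv_s14,
    sum_carryFreeAntidiagonal_two_pow_add hdisj (fun a b => sgn R a * coeff b g),
    sum_congr rfl hsgn, sum_neg_distrib]
  simp only [coeff_shiftS]
  abel
end
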